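/- Let U₀ be a unitary operator on a separable Hilbert space 𝓗, let Y be a trace class operator, and let {Q(t,s)}_{t,s∈ℕ} be a family of bounded operators with sup_{t,s}‖Q(t,s)‖ < ∞. For t, s ∈ ℕ define Z_{t,s}(A) = Σ_{k=0}^∞ U₀^{−k−t} A U₀^{k+s}. Then for every ψ in the domain 𝓗_{ac,0} (vectors with absolutely continuous U₀-spectral measure whose density G_ψ² satisfies G_ψ ∈ L² ∩ L^∞), lim_{t,s→∞} ⟨ψ, Z_{t,s}(Y·Q(t,s)) ψ⟩ = 0. -/

import Mathlib

noncomputable section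
open MeasureTheory Filter Topology Complex

/-- A bounded operator on a Hilbert space is trace class iff it admits a nuclear
representation `T = ∑ₙ |aₙ⟩⟨bₙ|` with `∑ₙ ‖aₙ‖‖bₙ‖ < ∞` (in a Hilbert space this is
equivalent to `Tr |T| < ∞`). -/
def IsTraceClass {E : Type*} [NormedAddCommGroup E] [InnerProductSpace ℂ E]
    (T : E →L[ℂ] E) : Prop :=
  ∃ a b : ℕ → E, Summable (fun n => ‖a n‖ * ‖b n‖) ∧
    ∀ ψ, T ψ = ∑' n, (inner ℂ (b n) ψ : ℂ) • a n

/-- `μ` is the spectral measure of the unitary `U` at the vector `ψ`, i.e. the finite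
Borel measure on `[0,2π)` with `⟨ψ, Uᵗψ⟩ = ∫ e^{itλ} dμ(λ)` for all `t ∈ ℤ`. -/
def IsVectorSpectralMeasure {E : Type*} [NormedAddCommGroup E] [InnerProductSpace ℂ E]
    [CompleteSpace E] (U : unitary (E →L[ℂ] E)) (ψ : E) (μ : Measure ℝ) : Prop :=
  IsFiniteMeasure μ ∧ μ (Set.Ico 0 (2 * Real.pi))ᶜ = 0 ∧
    ∀ t : ℤ, (inner ℂ ψ (((U ^ t : unitary (E →L[ℂ] E)) : E →L[ℂ] E) ψ) : ℂ)
      = ∫ l, Complex.exp (Complex.I * t * l) ∂μ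

/-- `ψ ∈ 𝓗_{ac,0}`: the spectral measure of `ψ` has a bounded density `G_ψ²`
(equivalently, `G_ψ ∈ L² ∩ L^∞`, the `L²` condition being automatic). -/
def IsAc0Vector {E : Type*} [NormedAddCommGroup E] [InnerProductSpace ℂ E]
    [CompleteSpace E] (U : unitary (E →L[ℂ] E)) (ψ : E) : Prop :=
  ∃ (μ : Measure ℝ) (C : NNReal), IsVectorSpectralMeasure U ψ μ ∧ μ ≤ C • volume
variable {E : Type*} [NormedAddCommGroup E] [InnerProductSpace ℂ E]
  [CompleteSpace E] [TopologicalSpace.SeparableSpace E]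

/-!
If the spectral measure `μ` of `ψ` has density at most `C` on `[0, 2π)`, then for every finite
family `c`,
`‖∑ cₘ U^m ψ‖² = ∫ |∑ cₘ e^{imλ}|² dμ ≤ C ∫₀^{2π} |∑ cₘ e^{imλ}|² dλ = 2πC ∑ |cₘ|²`,
so by duality `∑_{m ∈ ℤ} |⟨U^m ψ, x⟩|² ≤ 2πC ‖x‖²` for every `x` (the orbit of `ψ` is a Bessel
sequence). Writing `Y = ∑ₙ |aₙ⟩⟨bₙ|`, the `k`-th term of the series is
`∑ₙ ⟨Q(t,s)* bₙ, U^{k+s} ψ⟩ ⟨U^{k+t} ψ, aₙ⟩`. By Cauchy–Schwarz in `k`, the `n`-th row is bounded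
by `√(2πC) M ‖bₙ‖ (∑_{k ≥ t} |⟨U^k ψ, aₙ⟩|²)^{1/2}`: this is at most `2πC M ‖aₙ‖ ‖bₙ‖`, which is
summable in `n`, and it tends to `0` as `t → ∞` because it is the tail of a convergent series.
Dominated convergence in `n` concludes.
-/

open scoped InnerProductSpace InnerProduct ComplexConjugate

variable {H : Type*} [NormedAddCommGroup H] [InnerProductSpace ℂ H]

section Bessel

variable {ι : Type*}

theorem sum_norm_inner_sq_le_of_norm_sum_smul_sq_le (v : ι → H) {K : ℝ} (hK0 : 0 ≤ K)
    (hK : ∀ (F : Finset ι) (c : ι → ℂ), ‖∑ i ∈ F, c i • v i‖ ^ 2 ≤ K * ∑ i ∈ F, ‖c i‖ ^ 2)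
    (x : H) (F : Finset ι) : ∑ i ∈ F, ‖⟪v i, x⟫_ℂ‖ ^ 2 ≤ K * ‖x‖ ^ 2 := by
  set S := ∑ i ∈ F, ‖⟪v i, x⟫_ℂ‖ ^ 2
  set w := ∑ i ∈ F, ⟪v i, x⟫_ℂ • v i
  have hS : 0 ≤ S := by positivity
  have hSw : (S : ℂ) = ⟪w, x⟫_ℂ := by
    simp only [S, w, sum_inner, inner_smul_left, conj_mul', ofReal_sum, ofReal_pow]
  have hSle : S ≤ ‖w‖ * ‖x‖ := by
    have := norm_inner_le_norm (𝕜 := ℂ) w x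
    rwa [← hSw, norm_real, Real.norm_of_nonneg hS] at this
  have hsq : S ^ 2 ≤ K * S * ‖x‖ ^ 2 :=
    calc S ^ 2 ≤ (‖w‖ * ‖x‖) ^ 2 := pow_le_pow_left₀ hS hSle 2
      _ = ‖w‖ ^ 2 * ‖x‖ ^ 2 := by ring
      _ ≤ K * S * ‖x‖ ^ 2 := by gcongr; exact hK F _
  rcases hS.eq_or_lt with h0 | hpos
  · rw [← h0]
    positivity
  · nlinarith

theorem summable_norm_inner_sq_of_norm_sum_smul_sq_le (v : ι → H) {K : ℝ} (hK0 : 0 ≤ K)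
    (hK : ∀ (F : Finset ι) (c : ι → ℂ), ‖∑ i ∈ F, c i • v i‖ ^ 2 ≤ K * ∑ i ∈ F, ‖c i‖ ^ 2)
    (x : H) : Summable fun i => ‖⟪v i, x⟫_ℂ‖ ^ 2 :=
  summable_of_sum_le (fun _ => by positivity)
    (sum_norm_inner_sq_le_of_norm_sum_smul_sq_le v hK0 hK x)

theorem tsum_norm_inner_sq_le_of_norm_sum_smul_sq_le (v : ι → H) {K : ℝ} (hK0 : 0 ≤ K)
    (hK : ∀ (F : Finset ι) (c : ι → ℂ), ‖∑ i ∈ F, c i • v i‖ ^ 2 ≤ K * ∑ i ∈ F, ‖c i‖ ^ 2)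
    (x : H) : ∑' i, ‖⟪v i, x⟫_ℂ‖ ^ 2 ≤ K * ‖x‖ ^ 2 :=
  (summable_norm_inner_sq_of_norm_sum_smul_sq_le v hK0 hK x).tsum_le_of_sum_le
    (sum_norm_inner_sq_le_of_norm_sum_smul_sq_le v hK0 hK x)

end Bessel

theorem summable_mul_and_tsum_mul_le_sqrt {ι : Type*} {f g : ι → ℝ} (hf : ∀ i, 0 ≤ f i)
    (hg : ∀ i, 0 ≤ g i) (hf2 : Summable fun i => f i ^ 2) (hg2 : Summable fun i => g i ^ 2) :
    (Summable fun i => f i * g i) ∧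
      ∑' i, f i * g i ≤ √(∑' i, f i ^ 2) * √(∑' i, g i ^ 2) := by
  have h := Real.summable_and_inner_le_Lp_mul_Lq_tsum_of_nonneg Real.HolderConjugate.two_two hf hg
    (by simpa only [Real.rpow_two] using hf2) (by simpa only [Real.rpow_two] using hg2)
  simpa only [Real.rpow_two, ← Real.sqrt_eq_rpow] using h

theorem tendsto_tsum_tsum_of_dominated {α β γ G : Type*} [NormedAddCommGroup G]
    [CompleteSpace G] {l : Filter α} {f : α → β → γ → G} {bound : β → ℝ}
    (h_sum : Summable bound) (h_row : ∀ p n, Summable fun k => ‖f p n k‖)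
    (h_le : ∀ p n, ∑' k, ‖f p n k‖ ≤ bound n)
    (h_lim : ∀ n, Tendsto (fun p => ∑' k, ‖f p n k‖) l (𝓝 0)) :
    Tendsto (fun p => ∑' k, ∑' n, f p n k) l (𝓝 0) := by
  have h_col : ∀ p, Summable fun n => ∑' k, ‖f p n k‖ := fun p =>
    h_sum.of_nonneg_of_le (fun n => tsum_nonneg fun _ => norm_nonneg _) (h_le p)
  have h_swap : ∀ p, ∑' k, ∑' n, f p n k = ∑' n, ∑' k, f p n k := fun p =>
    (Summable.of_norm (f := Function.uncurry (f p))
      ((summable_prod_of_nonneg fun _ => norm_nonneg _).2 ⟨h_row p, h_col p⟩)).tsum_comm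
  have h_major : Tendsto (fun p => ∑' n, ∑' k, ‖f p n k‖) l (𝓝 0) := by
    have h := tendsto_tsum_of_dominated_convergence h_sum h_lim
      (Eventually.of_forall fun p n => by
        rw [Real.norm_of_nonneg (tsum_nonneg fun _ => norm_nonneg _)]; exact h_le p n)
    rwa [tsum_zero] at h
  have h_norm : ∀ p, Summable fun n => ‖∑' k, f p n k‖ := fun p =>
    (h_col p).of_nonneg_of_le (fun _ => norm_nonneg _) fun n => norm_tsum_le_tsum_norm (h_row p n)
  refine squeeze_zero_norm (fun p => ?_) h_major
  rw [h_swap]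
  exact (norm_tsum_le_tsum_norm (h_norm p)).trans <|
    Summable.tsum_le_tsum (fun n => norm_tsum_le_tsum_norm (h_row p n)) (h_norm p) (h_col p)

theorem inner_apply_eq_tsum_of_nuclear [CompleteSpace H] {ι : Type*} {T : H →L[ℂ] H}
    {a b : ι → H} (hab : Summable fun n => ‖a n‖ * ‖b n‖)
    (hT : ∀ z, T z = ∑' n, ⟪b n, z⟫_ℂ • a n) (x y : H) :
    ⟪x, T y⟫_ℂ = ∑' n, ⟪b n, y⟫_ℂ * ⟪x, a n⟫_ℂ := by
  have hsum : Summable fun n => ⟪b n, y⟫_ℂ • a n :=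
    Summable.of_norm_bounded (hab.mul_right ‖y‖) fun n =>
      calc ‖⟪b n, y⟫_ℂ • a n‖ = ‖⟪b n, y⟫_ℂ‖ * ‖a n‖ := norm_smul _ _
        _ ≤ ‖b n‖ * ‖y‖ * ‖a n‖ := by gcongr; exact norm_inner_le_norm _ _
        _ = ‖a n‖ * ‖b n‖ * ‖y‖ := by ring
  rw [hT, ← innerSL_apply_apply ℂ, ContinuousLinearMap.map_tsum _ hsum]
  simp only [innerSL_apply_apply, inner_smul_right]

theorem integral_le_mul_setIntegral_of_le_smul {α : Type*} [MeasurableSpace α]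
    {μ ν : Measure α} {C : NNReal} (hμ : μ ≤ C • ν) {s : Set α} (hμs : μ sᶜ = 0)
    {f : α → ℝ} (hf : 0 ≤ f) (hfi : IntegrableOn f s ν) :
    ∫ x, f x ∂μ ≤ C * ∫ x in s, f x ∂ν :=
  calc ∫ x, f x ∂μ = ∫ x, f x ∂μ.restrict s := by rw [Measure.restrict_eq_self_of_ae_mem hμs]
    _ ≤ ∫ x, f x ∂(C • ν).restrict s :=
        integral_mono_measure (Measure.restrict_mono le_rfl hμ) (ae_of_all _ hf)
          (by rw [Measure.restrict_smul]; exact hfi.smul_measure ENNReal.coe_ne_top)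
    _ = C * ∫ x in s, f x ∂ν := by
        rw [Measure.restrict_smul, integral_smul_nnreal_measure]; rfl

section TrigPoly

theorem integral_exp_I_mul_int_mul (d : ℤ) :
    ∫ l in (0 : ℝ)..2 * Real.pi, exp (I * d * l) = if d = 0 then 2 * (Real.pi : ℂ) else 0 := by
  split_ifs with hd
  · simp [hd]
  · have hId : I * d ≠ 0 := mul_ne_zero I_ne_zero (Int.cast_ne_zero.mpr hd)
    have hperiod : I * d * ((2 * Real.pi : ℝ) : ℂ) = d * (2 * Real.pi * I) := by
      push_cast; ring
    rw [integral_exp_mul_complex hId, hperiod, exp_int_mul_two_pi_mul_I]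
    simp

theorem continuous_exp_I_mul_int_mul (d : ℤ) : Continuous fun l : ℝ => exp (I * d * l) := by
  fun_prop

theorem norm_exp_I_mul_int_mul (d : ℤ) (l : ℝ) : ‖exp (I * d * l)‖ = 1 := by
  rw [show I * d * l = ((d * l : ℝ) : ℂ) * I by push_cast; ring, norm_exp_ofReal_mul_I]

def trigPoly (F : Finset ℤ) (c : ℤ → ℂ) (l : ℝ) : ℂ :=
  ∑ m ∈ F, c m * exp (I * m * l)

theorem continuous_trigPoly (F : Finset ℤ) (c : ℤ → ℂ) : Continuous (trigPoly F c) :=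
  continuous_finsetSum _ fun m _ => continuous_const.mul (continuous_exp_I_mul_int_mul m)

theorem ofReal_norm_sq_trigPoly (F : Finset ℤ) (c : ℤ → ℂ) (l : ℝ) :
    ((‖trigPoly F c l‖ ^ 2 : ℝ) : ℂ)
      = ∑ m ∈ F, ∑ n ∈ F, conj (c m) * c n * exp (I * ↑(n - m) * l) := by
  rw [ofReal_pow, ← conj_mul', trigPoly, map_sum, Finset.sum_mul_sum]
  refine Finset.sum_congr rfl fun m _ => Finset.sum_congr rfl fun n _ => ?_
  have hconj : conj (exp (I * m * l)) = exp (-(I * m * l)) := by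
    rw [← exp_conj]; simp
  rw [map_mul, hconj]
  calc conj (c m) * exp (-(I * m * l)) * (c n * exp (I * n * l))
      = conj (c m) * c n * (exp (-(I * m * l)) * exp (I * n * l)) := by ring
    _ = conj (c m) * c n * exp (I * ↑(n - m) * l) := by
        rw [← exp_add]; push_cast; ring_nf

theorem ofReal_integral_norm_sq_trigPoly (ν : Measure ℝ) [IsFiniteMeasure ν] (F : Finset ℤ)
    (c : ℤ → ℂ) :
    ((∫ l, ‖trigPoly F c l‖ ^ 2 ∂ν : ℝ) : ℂ)
      = ∑ m ∈ F, ∑ n ∈ F, conj (c m) * c n * ∫ l, exp (I * ↑(n - m) * l) ∂ν := by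
  have hint (d : ℤ) : Integrable (fun l : ℝ => exp (I * d * l)) ν :=
    (integrable_const (1 : ℝ)).mono' (continuous_exp_I_mul_int_mul d).aestronglyMeasurable
      (ae_of_all _ fun l => (norm_exp_I_mul_int_mul d l).le)
  rw [← integral_complex_ofReal]
  simp_rw [ofReal_norm_sq_trigPoly]
  rw [integral_finsetSum _ fun m _ => integrable_finsetSum _ fun n _ => (hint _).const_mul _]
  refine Finset.sum_congr rfl fun m _ => ?_
  rw [integral_finsetSum _ fun n _ => (hint _).const_mul _]
  exact Finset.sum_congr rfl fun n _ => integral_const_mul _ _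

theorem integral_norm_sq_trigPoly_period (F : Finset ℤ) (c : ℤ → ℂ) :
    ∫ l in (0 : ℝ)..2 * Real.pi, ‖trigPoly F c l‖ ^ 2 = 2 * Real.pi * ∑ m ∈ F, ‖c m‖ ^ 2 := by
  have h := ofReal_integral_norm_sq_trigPoly (volume.restrict (Set.Ioc 0 (2 * Real.pi))) F c
  simp_rw [← intervalIntegral.integral_of_le Real.two_pi_pos.le, integral_exp_I_mul_int_mul,
    sub_eq_zero, mul_ite, mul_zero, Finset.sum_ite_eq', conj_mul'] at h
  rw [Finset.sum_ite_of_true fun _ h => h, ← Finset.sum_mul] at h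
  rw [mul_comm (2 * Real.pi)]
  exact_mod_cast h

end TrigPoly

section Orbit

variable [CompleteSpace H]

theorem inner_zpow_apply_zpow_apply (U : unitary (H →L[ℂ] H)) (ψ : H) (m n : ℤ) :
    ⟪(↑(U ^ m) : H →L[ℂ] H) ψ, (↑(U ^ n) : H →L[ℂ] H) ψ⟫_ℂ
      = ⟪ψ, (↑(U ^ (n - m)) : H →L[ℂ] H) ψ⟫_ℂ := by
  conv_lhs => rw [show n = m + (n - m) by ring, zpow_add, MulMemClass.coe_mul,
    mul_apply_eq_comp, Unitary.inner_map_map]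

namespace IsVectorSpectralMeasure

variable {U : unitary (H →L[ℂ] H)} {ψ : H} {μ : Measure ℝ} {C : NNReal}

theorem inner_zpow_apply_eq_integral (h : IsVectorSpectralMeasure U ψ μ) (m n : ℤ) :
    ⟪(↑(U ^ m) : H →L[ℂ] H) ψ, (↑(U ^ n) : H →L[ℂ] H) ψ⟫_ℂ
      = ∫ l, exp (I * ↑(n - m) * l) ∂μ := by
  rw [inner_zpow_apply_zpow_apply, h.2.2]

theorem norm_sum_smul_zpow_apply_sq_le (h : IsVectorSpectralMeasure U ψ μ)
    (hC : μ ≤ C • volume) (F : Finset ℤ) (c : ℤ → ℂ) :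
    ‖∑ m ∈ F, c m • (↑(U ^ m) : H →L[ℂ] H) ψ‖ ^ 2 ≤ 2 * Real.pi * C * ∑ m ∈ F, ‖c m‖ ^ 2 := by
  have := h.1
  have hnorm : ‖∑ m ∈ F, c m • (↑(U ^ m) : H →L[ℂ] H) ψ‖ ^ 2
      = ∫ l, ‖trigPoly F c l‖ ^ 2 ∂μ := by
    have hself (v : H) : ((‖v‖ ^ 2 : ℝ) : ℂ) = ⟪v, v⟫_ℂ := by
      rw [inner_self_eq_norm_sq_to_K]; norm_cast
    apply ofReal_injective
    rw [ofReal_integral_norm_sq_trigPoly, hself]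
    simp only [sum_inner, inner_sum, inner_smul_left, inner_smul_right,
      h.inner_zpow_apply_eq_integral, Finset.mul_sum]
    rw [Finset.sum_comm]
    exact Finset.sum_congr rfl fun _ _ => Finset.sum_congr rfl fun _ _ => by ring
  calc ‖∑ m ∈ F, c m • (↑(U ^ m) : H →L[ℂ] H) ψ‖ ^ 2
      = ∫ l, ‖trigPoly F c l‖ ^ 2 ∂μ := hnorm
    _ ≤ C * ∫ l in Set.Ico 0 (2 * Real.pi), ‖trigPoly F c l‖ ^ 2 :=
        integral_le_mul_setIntegral_of_le_smul (f := fun l => ‖trigPoly F c l‖ ^ 2) hC h.2.1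
          (fun _ => by positivity)
          (((continuous_trigPoly F c).norm.pow 2).integrableOn_Icc.mono_set
            Set.Ico_subset_Icc_self)
    _ = 2 * Real.pi * C * ∑ m ∈ F, ‖c m‖ ^ 2 := by
        rw [integral_Ico_eq_integral_Ioo, ← integral_Ioc_eq_integral_Ioo,
          ← intervalIntegral.integral_of_le Real.two_pi_pos.le,
          integral_norm_sq_trigPoly_period]
        ring

theorem summable_norm_inner_pow_add_apply_sq (h : IsVectorSpectralMeasure U ψ μ)
    (hC : μ ≤ C • volume) (x : H) (t : ℕ) :
    Summable fun k : ℕ => ‖⟪(↑(U ^ (k + t)) : H →L[ℂ] H) ψ, x⟫_ℂ‖ ^ 2 := by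
  have hZ := summable_norm_inner_sq_of_norm_sum_smul_sq_le
    (fun m : ℤ => (↑(U ^ m) : H →L[ℂ] H) ψ) (by positivity) (h.norm_sum_smul_zpow_apply_sq_le hC) x
  simpa only [Function.comp_def, zpow_natCast] using
    hZ.comp_injective (i := fun k : ℕ => ((k + t : ℕ) : ℤ)) fun _ _ hkl => by simpa using hkl

theorem tsum_norm_inner_pow_add_apply_sq_le (h : IsVectorSpectralMeasure U ψ μ)
    (hC : μ ≤ C • volume) (x : H) (t : ℕ) :
    ∑' k : ℕ, ‖⟪(↑(U ^ (k + t)) : H →L[ℂ] H) ψ, x⟫_ℂ‖ ^ 2 ≤ 2 * Real.pi * C * ‖x‖ ^ 2 := by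
  have hZ := summable_norm_inner_sq_of_norm_sum_smul_sq_le
    (fun m : ℤ => (↑(U ^ m) : H →L[ℂ] H) ψ) (by positivity) (h.norm_sum_smul_zpow_apply_sq_le hC) x
  have hle := tsum_comp_le_tsum_of_inj hZ (fun _ => by positivity)
    (i := fun k : ℕ => ((k + t : ℕ) : ℤ)) fun _ _ hkl => by simpa using hkl
  simp only [Function.comp_def, zpow_natCast] at hle
  exact hle.trans (tsum_norm_inner_sq_le_of_norm_sum_smul_sq_le _ (by positivity)
    (h.norm_sum_smul_zpow_apply_sq_le hC) x)

theorem summable_and_tsum_norm_inner_mul_inner_le (h : IsVectorSpectralMeasure U ψ μ)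
    (hC : μ ≤ C • volume) (x y : H) (t s : ℕ) :
    (Summable fun k : ℕ => ‖⟪y, (↑(U ^ (k + s)) : H →L[ℂ] H) ψ⟫_ℂ
        * ⟪(↑(U ^ (k + t)) : H →L[ℂ] H) ψ, x⟫_ℂ‖) ∧
      ∑' k : ℕ, ‖⟪y, (↑(U ^ (k + s)) : H →L[ℂ] H) ψ⟫_ℂ
          * ⟪(↑(U ^ (k + t)) : H →L[ℂ] H) ψ, x⟫_ℂ‖
        ≤ √(2 * Real.pi * C) * ‖y‖
          * √(∑' k : ℕ, ‖⟪(↑(U ^ (k + t)) : H →L[ℂ] H) ψ, x⟫_ℂ‖ ^ 2) := by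
  simp only [norm_mul, norm_inner_symm y]
  obtain ⟨hsum, hle⟩ := summable_mul_and_tsum_mul_le_sqrt (fun _ => norm_nonneg _)
    (fun _ => norm_nonneg _) (h.summable_norm_inner_pow_add_apply_sq hC y s)
    (h.summable_norm_inner_pow_add_apply_sq hC x t)
  refine ⟨hsum, hle.trans ?_⟩
  gcongr
  calc √(∑' k : ℕ, ‖⟪(↑(U ^ (k + s)) : H →L[ℂ] H) ψ, y⟫_ℂ‖ ^ 2)
      ≤ √(2 * Real.pi * C * ‖y‖ ^ 2) :=
        Real.sqrt_le_sqrt (h.tsum_norm_inner_pow_add_apply_sq_le hC y s)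
    _ = √(2 * Real.pi * C) * ‖y‖ := by
        rw [Real.sqrt_mul (by positivity), Real.sqrt_sq (norm_nonneg y)]

theorem tsum_norm_inner_mul_inner_le (h : IsVectorSpectralMeasure U ψ μ)
    (hC : μ ≤ C • volume) (x y : H) (t s : ℕ) :
    ∑' k : ℕ, ‖⟪y, (↑(U ^ (k + s)) : H →L[ℂ] H) ψ⟫_ℂ * ⟪(↑(U ^ (k + t)) : H →L[ℂ] H) ψ, x⟫_ℂ‖
      ≤ 2 * Real.pi * C * ‖y‖ * ‖x‖ := by
  have hP : 0 ≤ 2 * Real.pi * C := by positivity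
  calc _ ≤ √(2 * Real.pi * C) * ‖y‖
          * √(∑' k : ℕ, ‖⟪(↑(U ^ (k + t)) : H →L[ℂ] H) ψ, x⟫_ℂ‖ ^ 2) :=
        (h.summable_and_tsum_norm_inner_mul_inner_le hC x y t s).2
    _ ≤ √(2 * Real.pi * C) * ‖y‖ * √(2 * Real.pi * C * ‖x‖ ^ 2) := by
        gcongr
        exact h.tsum_norm_inner_pow_add_apply_sq_le hC x t
    _ = 2 * Real.pi * C * ‖y‖ * ‖x‖ := by
        rw [Real.sqrt_mul hP, Real.sqrt_sq (norm_nonneg x)]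
        linear_combination ‖y‖ * ‖x‖ * Real.mul_self_sqrt hP

theorem tendsto_tsum_norm_inner_mul_inner (h : IsVectorSpectralMeasure U ψ μ)
    (hC : μ ≤ C • volume) (x : H) {y : ℕ × ℕ → H} {B : ℝ} (hy : ∀ p, ‖y p‖ ≤ B) :
    Tendsto (fun p : ℕ × ℕ => ∑' k : ℕ, ‖⟪y p, (↑(U ^ (k + p.2)) : H →L[ℂ] H) ψ⟫_ℂ
      * ⟪(↑(U ^ (k + p.1)) : H →L[ℂ] H) ψ, x⟫_ℂ‖) atTop (𝓝 0) := by
  have htail : Tendsto (fun p : ℕ × ℕ => √(2 * Real.pi * C) * B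
      * √(∑' k : ℕ, ‖⟪(↑(U ^ (k + p.1)) : H →L[ℂ] H) ψ, x⟫_ℂ‖ ^ 2)) atTop (𝓝 0) := by
    simpa using ((tendsto_sum_nat_add fun k => ‖⟪(↑(U ^ k) : H →L[ℂ] H) ψ, x⟫_ℂ‖ ^ 2).sqrt.comp
      (tendsto_atTop_atTop_of_monotone monotone_fst fun t => ⟨(t, 0), le_rfl⟩)).const_mul
        (√(2 * Real.pi * C) * B)
  refine squeeze_zero (fun p => tsum_nonneg fun _ => norm_nonneg _) (fun p => ?_) htail
  refine (h.summable_and_tsum_norm_inner_mul_inner_le hC x (y p) p.1 p.2).2.trans ?_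
  gcongr
  exact hy p

end IsVectorSpectralMeasure

end Orbit

/-- Lemma 3.5 (1): with `Z_{t,s}(A) = ∑_{k≥0} U₀^{-k-t} A U₀^{k+s}`
(matrix elements on `𝓗_{ac,0}`), for `Y` trace class and `Q(t,s)` uniformly bounded,
`⟨ψ, Z_{t,s}(Y Q(t,s)) ψ⟩ = ∑_{k≥0} ⟨U₀^{k+t}ψ, Y Q(t,s) U₀^{k+s}ψ⟩ → 0` as `t,s → ∞`. -/
theorem Z_limit_traceClass_left
    (U0 : unitary (E →L[ℂ] E)) (Y : E →L[ℂ] E) (hY : IsTraceClass Y)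
    (Q : ℕ → ℕ → (E →L[ℂ] E)) (hQ : ∃ M : ℝ, ∀ t s : ℕ, ‖Q t s‖ ≤ M)
    (ψ : E) (hψ : IsAc0Vector U0 ψ) :
    Tendsto (fun p : ℕ × ℕ => ∑' k : ℕ,
      (inner ℂ ((((U0 ^ (k + p.1)) : unitary (E →L[ℂ] E)) : E →L[ℂ] E) ψ)
        ((Y.comp (Q p.1 p.2)) ((((U0 ^ (k + p.2)) : unitary (E →L[ℂ] E)) : E →L[ℂ] E) ψ)) : ℂ))
      atTop (𝓝 0) := by
  obtain ⟨a, b, hab, hYab⟩ := hY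
  obtain ⟨M, hM⟩ := hQ
  obtain ⟨μ, C, hμ, hC⟩ := hψ
  have hQb (t s n : ℕ) : ‖((Q t s)†) (b n)‖ ≤ M * ‖b n‖ :=
    (((Q t s)†).le_opNorm _).trans <| by
      rw [ContinuousLinearMap.adjoint.norm_map]; gcongr; exact hM t s
  have hexpand (t s : ℕ) (x y : E) :
      ⟪x, Y.comp (Q t s) y⟫_ℂ = ∑' n, ⟪((Q t s)†) (b n), y⟫_ℂ * ⟪x, a n⟫_ℂ := by
    simp only [ContinuousLinearMap.comp_apply, inner_apply_eq_tsum_of_nuclear hab hYab,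
      ContinuousLinearMap.adjoint_inner_left]
  simp only [hexpand]
  exact tendsto_tsum_tsum_of_dominated
    (bound := fun n => 2 * Real.pi * C * (M * ‖b n‖) * ‖a n‖)
    ((hab.mul_left (2 * Real.pi * C * M)).congr fun n => by ring)
    (fun p n => (hμ.summable_and_tsum_norm_inner_mul_inner_le hC _ _ _ _).1)
    (fun p n => (hμ.tsum_norm_inner_mul_inner_le hC _ _ _ _).trans (by gcongr; exact hQb _ _ n))
    (fun n => hμ.tendsto_tsum_norm_inner_mul_inner hC (a n) fun p => hQb p.1 p.2 n)
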